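/- Let (M, δ) be a finite (or compact) metric space with at least k ≥ 2 points, let q_1, …, q_k be a farthest-point-insertion sequence with S_i = {q_1, …, q_i}, and let P = {p_1, …, p_k} ⊆ M be a k-point subset whose gap ratio α = GR_P satisfies α < 2/3, with minimum gap r_P. Then for all i ∈ {2, …, k}, 2·r_{S_i} ≥ (2 − α)·r_P. -/

import Mathlib

open Metric

/-- Minimum gap of a point set `P`: half the least pairwise distance. -/
noncomputable def minGap {E : Type*} [MetricSpace E] (P : Set E) : ℝ :=
  sInf {d : ℝ | ∃ p ∈ P, ∃ q ∈ P, p ≠ q ∧ d = dist p q} / 2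

/-- Maximum gap of `P` over the space `X`: the covering radius of `P` in `X`. -/
noncomputable def maxGap {E : Type*} [MetricSpace E] (X P : Set E) : ℝ :=
  sSup ((fun q => Metric.infDist q P) '' X)

/-- Gap ratio of `P` over the space `X`. -/
noncomputable def gapRatio {E : Type*} [MetricSpace E] (X P : Set E) : ℝ :=
  maxGap X P / minGap P

/-- The first `i` points of the sequence `q`. -/
def fpiPrefix {E : Type*} (q : ℕ → E) (i : ℕ) : Set E := q '' {j | j < i}

/-- `q` is a farthest-point-insertion sequence of length `k` in the space `X`:
`q 0` and `q 1` realize the diameter of `X`, and each subsequent point is a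
point of `X` farthest from the already chosen points. -/
def IsFPIOn {E : Type*} [MetricSpace E] (X : Set E) (k : ℕ) (q : ℕ → E) : Prop :=
  (∀ i < k, q i ∈ X) ∧
  dist (q 0) (q 1) = Metric.diam X ∧
  ∀ i, 2 ≤ i → i < k →
    Metric.infDist (q i) (fpiPrefix q i) = maxGap X (fpiPrefix q i)

/-!
Write `R = α r_P` for the covering radius of `P`. A set `S` with fewer than `k` points leaves
some `p ∈ P` that is the nearest `P`-point of no `s ∈ S` (pigeonhole). For any `s ∈ S`, its
nearest `P`-point `p' ≠ p` gives `2 r_P ≤ δ(p', p) ≤ R + δ(s, p)`, so the covering radius of `S`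
is at least `2 r_P - R = (2 - α) r_P`. Along a farthest-point-insertion sequence each new point
lies at distance exactly the covering radius of the earlier ones from all of them, hence at least
`(2 - α) r_P` from each; the first two points are at distance `diam M ≥ 2 r_P`.
-/

open Set

section Gaps

variable {E : Type*} [MetricSpace E]

lemma minGap_nonneg (P : Set E) : 0 ≤ minGap P := by
  refine div_nonneg (Real.sInf_nonneg ?_) zero_le_two
  rintro _ ⟨p, -, q, -, -, rfl⟩
  exact dist_nonneg

lemma two_mul_minGap_le_dist {P : Set E} {a b : E} (ha : a ∈ P) (hb : b ∈ P) (hab : a ≠ b) :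
    2 * minGap P ≤ dist a b := by
  rw [minGap, mul_div_cancel₀ _ two_ne_zero]
  refine csInf_le ⟨0, ?_⟩ ⟨a, ha, b, hb, hab, rfl⟩
  rintro _ ⟨p, -, q, -, -, rfl⟩
  exact dist_nonneg

lemma le_two_mul_minGap {P : Set E} {c : ℝ} (hP : P.Nontrivial)
    (hc : ∀ a ∈ P, ∀ b ∈ P, a ≠ b → c ≤ dist a b) : c ≤ 2 * minGap P := by
  obtain ⟨a, ha, b, hb, hab⟩ := hP
  rw [minGap, mul_div_cancel₀ _ two_ne_zero]
  refine le_csInf ⟨_, a, ha, b, hb, hab, rfl⟩ ?_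
  rintro _ ⟨p, hp, q, hq, hpq, rfl⟩
  exact hc p hp q hq hpq

lemma Set.Finite.minGap_pos {P : Set E} (hfin : P.Finite) (hP : P.Nontrivial) :
    0 < minGap P := by
  obtain ⟨a, ha, b, hb, hab⟩ := hP
  set D := {d : ℝ | ∃ p ∈ P, ∃ q ∈ P, p ≠ q ∧ d = dist p q}
  have hD : D.Finite := ((hfin.prod hfin).image fun x => dist x.1 x.2).subset <| by
    rintro _ ⟨p, hp, q, hq, -, rfl⟩
    exact ⟨(p, q), ⟨hp, hq⟩, rfl⟩
  have hDne : D.Nonempty := ⟨_, a, ha, b, hb, hab, rfl⟩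
  obtain ⟨p, -, q, -, hpq, hmin⟩ := hDne.csInf_mem hD
  show 0 < sInf D / 2
  rw [hmin]
  exact half_pos (dist_pos.2 hpq)

lemma infDist_le_maxGap {X : Set E} (hX : IsCompact X) (S : Set E) {x : E} (hx : x ∈ X) :
    infDist x S ≤ maxGap X S :=
  le_csSup (hX.image (continuous_infDist_pt S)).bddAbove ⟨x, hx, rfl⟩

theorem two_mul_minGap_sub_maxGap_le_maxGap {X P S : Set E} (hX : IsCompact X) (hPX : P ⊆ X)
    (hSX : S ⊆ X) (hP : P.Finite) (hS : S.Finite) (hSne : S.Nonempty)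
    (hcard : S.ncard < P.ncard) :
    2 * minGap P - maxGap X P ≤ maxGap X S := by
  have hPne : P.Nonempty := nonempty_of_ncard_ne_zero (by omega)
  have hnear : ∀ s ∈ S, ∃ p ∈ P, dist s p ≤ maxGap X P := by
    intro s hs
    obtain ⟨p, hp, hdist⟩ := hP.isCompact.exists_infDist_eq_dist hPne s
    exact ⟨p, hp, hdist ▸ infDist_le_maxGap hX P (hSX hs)⟩
  choose! g hgP hgd using hnear
  obtain ⟨p, hp, hpg⟩ :=
    exists_mem_notMem_of_ncard_lt_ncard ((ncard_image_le hS).trans_lt hcard) (hS.image g)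
  have hfar : ∀ s ∈ S, 2 * minGap P - maxGap X P ≤ dist p s := by
    intro s hs
    have hgs : g s ≠ p := fun h => hpg ⟨s, hs, h⟩
    linarith [two_mul_minGap_le_dist (hgP s hs) hp hgs, dist_triangle (g s) s p,
      dist_comm (g s) s, dist_comm s p, hgd s hs]
  calc 2 * minGap P - maxGap X P ≤ infDist p S := (le_infDist hSne).2 hfar
    _ ≤ maxGap X S := infDist_le_maxGap hX S (hPX hp)

end Gaps

lemma fpiPrefix_finite {E : Type*} (q : ℕ → E) (i : ℕ) : (fpiPrefix q i).Finite :=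
  (finite_Iio i).image q

lemma ncard_fpiPrefix_le {E : Type*} (q : ℕ → E) (i : ℕ) : (fpiPrefix q i).ncard ≤ i :=
  (ncard_image_le (finite_Iio i)).trans (ncard_Iio_nat i).le

namespace IsFPIOn

variable {E : Type*} [MetricSpace E] {X : Set E} {k : ℕ} {q : ℕ → E} {c : ℝ}

lemma le_dist (hq : IsFPIOn X k q) (hdiam : c ≤ diam X)
    (hgap : ∀ l, 2 ≤ l → l < k → c ≤ maxGap X (fpiPrefix q l)) {j l : ℕ} (hjl : j < l)
    (hlk : l < k) : c ≤ dist (q j) (q l) := by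
  rcases lt_or_ge l 2 with hl | hl
  · obtain rfl : j = 0 := by omega
    obtain rfl : l = 1 := by omega
    exact hq.2.1 ▸ hdiam
  · have hmem : q j ∈ fpiPrefix q l := ⟨j, hjl, rfl⟩
    calc c ≤ maxGap X (fpiPrefix q l) := hgap l hl hlk
      _ = infDist (q l) (fpiPrefix q l) := (hq.2.2 l hl hlk).symm
      _ ≤ dist (q l) (q j) := infDist_le_dist_of_mem hmem
      _ = dist (q j) (q l) := dist_comm _ _

lemma le_two_mul_minGap_fpiPrefix (hq : IsFPIOn X k q) (hdiam : c ≤ diam X)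
    (hgap : ∀ l, 2 ≤ l → l < k → c ≤ maxGap X (fpiPrefix q l)) {i : ℕ} (hi : 2 ≤ i)
    (hik : i ≤ k) : c ≤ 2 * minGap (fpiPrefix q i) := by
  rcases le_or_gt c 0 with hc | hc
  · exact hc.trans (mul_nonneg zero_le_two (minGap_nonneg _))
  have hpair : ∀ j l, j < l → l < i → c ≤ dist (q j) (q l) :=
    fun j l hjl hli => hq.le_dist hdiam hgap hjl (by omega)
  refine le_two_mul_minGap
    ⟨q 0, ⟨0, show 0 < i by omega, rfl⟩, q 1, ⟨1, show 1 < i by omega, rfl⟩, ?_⟩ ?_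
  · exact dist_pos.1 (hc.trans_le (hpair 0 1 one_pos hi))
  · rintro _ ⟨j, hj, rfl⟩ _ ⟨l, hl, rfl⟩ hne
    rcases lt_trichotomy j l with h | rfl | h
    · exact hpair j l h hl
    · exact absurd rfl hne
    · exact dist_comm (q l) (q j) ▸ hpair l j h hj

end IsFPIOn

theorem stmt9_general {M : Type*} [MetricSpace M] [CompactSpace M] (k : ℕ)
    (q : ℕ → M) (hq : IsFPIOn Set.univ k q)
    (P : Set M) (hP : P.ncard = k)
    (α : ℝ) (hα : α = gapRatio Set.univ P) :
    ∀ i, 2 ≤ i → i ≤ k →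
      (2 - α) * minGap P ≤ 2 * minGap (fpiPrefix q i) := by
  intro i hi hik
  have hPfin : P.Finite := finite_of_ncard_pos (by omega)
  have hPnt : P.Nontrivial := by
    have := hPfin.to_subtype
    exact one_lt_ncard_iff_nontrivial.1 (by omega)
  have hα_mul : (2 - α) * minGap P = 2 * minGap P - maxGap univ P := by
    rw [hα, gapRatio, sub_mul, div_mul_cancel₀ _ (hPfin.minGap_pos hPnt).ne']
  rw [hα_mul]
  refine hq.le_two_mul_minGap_fpiPrefix ?_ (fun l hl hlk => ?_) hi hik
  · obtain ⟨a, ha, b, hb, hab⟩ := hPnt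
    have hR : 0 ≤ maxGap univ P :=
      infDist_nonneg.trans (infDist_le_maxGap isCompact_univ P (mem_univ a))
    linarith [two_mul_minGap_le_dist ha hb hab,
      dist_le_diam_of_mem isCompact_univ.isBounded (mem_univ a) (mem_univ b)]
  · exact two_mul_minGap_sub_maxGap_le_maxGap isCompact_univ (subset_univ P) (subset_univ _)
      hPfin (fpiPrefix_finite q l) ⟨q 0, 0, show 0 < l by omega, rfl⟩
      ((ncard_fpiPrefix_le q l).trans_lt (hP ▸ hlk))

/-- If `P` is a `k`-point subset with gap ratio `α < 2/3` and minimum gap `r_P`,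
then along a farthest-point-insertion sequence every prefix `S_i` (`2 ≤ i ≤ k`)
satisfies `2·r_{S_i} ≥ (2 − α)·r_P`. -/
theorem stmt9 {M : Type*} [MetricSpace M] [CompactSpace M] (k : ℕ) (hk : 2 ≤ k)
    (hpts : ∃ f : Fin k → M, Function.Injective f)
    (q : ℕ → M) (hq : IsFPIOn Set.univ k q)
    (P : Set M) (hP : P.ncard = k)
    (α : ℝ) (hα : α = gapRatio Set.univ P) (hα23 : α < 2/3) :
    ∀ i, 2 ≤ i → i ≤ k →
      (2 - α) * minGap P ≤ 2 * minGap (fpiPrefix q i) :=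
  stmt9_general k q hq P hP α hα
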